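/- Let π be a permutation of length n > 2 with exactly one descent. If π contains a triple adjacency (three letters c, c+1, c+2 in consecutive positions), then μ(1, π) = 0. -/

import Mathlib

/-- Two lists of naturals are order-isomorphic: same length and same relative order. -/
def OrdIso (a b : List ℕ) : Prop :=
  a.length = b.length ∧
    ∀ i, i < a.length → ∀ j, j < a.length →
      (a.getD i 0 < a.getD j 0 ↔ b.getD i 0 < b.getD j 0)

instance (a b : List ℕ) : Decidable (OrdIso a b) := by unfold OrdIso; infer_instance

/-- `σ` occurs as a pattern in `π`: some subsequence of `π` is order-isomorphic to `σ`. -/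
def occursIn (σ π : List ℕ) : Prop := ∃ s ∈ π.sublists, OrdIso σ s

instance (σ π : List ℕ) : Decidable (occursIn σ π) := by unfold occursIn; infer_instance

/-- `l` is a permutation of `1, …, l.length`. -/
def IsPermList (l : List ℕ) : Prop := l.Perm ((List.range l.length).map (· + 1))

/-- The number of descents of `l` (positions `i` with `l i > l (i+1)`, 0-based). -/
def des (l : List ℕ) : ℕ :=
  ((List.range (l.length - 1)).filter (fun i => decide (l.getD (i+1) 0 < l.getD i 0))).length

/-- `d_π(c)`: one plus the number of descents of `π` preceding the letter `c`. -/
def dval (l : List ℕ) (c : ℕ) : ℕ :=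
  1 + ((List.range (l.idxOf c)).filter (fun i => decide (l.getD (i+1) 0 < l.getD i 0))).length

/-- The word `f(π) = d_π(1) d_π(2) ⋯ d_π(n)`. -/
def fword (l : List ℕ) : List ℕ := (List.range l.length).map (fun i => dval l (i+1))

/-- The largest letter of the word `w`. -/
def maxLetter (w : List ℕ) : ℕ := w.foldr max 0

/-- `p_w(j)`: positions (1-based, increasing) of the letter `j` in `w`. -/
def posList (w : List ℕ) (j : ℕ) : List ℕ :=
  ((List.range w.length).filter (fun i => decide (w.getD i 0 = j))).map (· + 1)

/-- `g(w)`: the concatenation of the position lists `p_w(1), …, p_w(max w)`. -/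
def gperm (w : List ℕ) : List ℕ := (List.range (maxLetter w)).flatMap (fun j => posList w (j+1))

/-- Membership in the poset 𝒜̂: positive letters, every letter in `{1,…,max w}` occurs,
and the rightmost occurrence of each `i < max w` is preceded by an occurrence of `i+1`. -/
def InAhat (w : List ℕ) : Prop :=
  (∀ x ∈ w, 1 ≤ x) ∧
  (∀ i, i < maxLetter w → i + 1 ∈ w) ∧
  (∀ i, i < maxLetter w - 1 → ∃ t, t < w.length ∧ w.getD t 0 = i + 1 ∧
     (∀ s, s < w.length → t < s → w.getD s 0 ≠ i + 1) ∧ ∃ u, u < t ∧ w.getD u 0 = i + 2)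

instance (w : List ℕ) : Decidable (InAhat w) := by unfold InAhat; infer_instance

/-- All permutations (as lists on `1..k`) of every length `k ≤ n`. -/
def permsUpTo (n : ℕ) : List (List ℕ) :=
  (List.range (n+1)).flatMap (fun k => ((List.range k).map (· + 1)).permutations)

/-- The interval `[a,b]` in the pattern containment poset, as a list. -/
def intervalList (a b : List ℕ) : List (List ℕ) :=
  (permsUpTo b.length).filter (fun z => decide (occursIn a z ∧ occursIn z b))

/-- `μ` is the Möbius function of the poset of permutations under pattern containment:
`μ(a,a) = 1` and, for `a < b`, `∑_{a ≤ z ≤ b} μ(a,z) = 0`. -/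
def MoebiusOn (μ : List ℕ → List ℕ → ℤ) : Prop :=
  (∀ a, μ a a = 1) ∧
  ∀ a b, IsPermList a → IsPermList b → occursIn a b → a ≠ b →
    ((intervalList a b).map (μ a)).sum = 0

/-- All lists of length `n` with entries in `{0, …, k-1}`. -/
def listsOf (n k : ℕ) : List (List ℕ) :=
  (List.range n).foldr (fun _ acc => (List.range k).flatMap (fun a => acc.map (a :: ·))) [[]]

/-- The letters of `π` in the nonzero positions of `η`. -/
def embOcc (η π : List ℕ) : List ℕ :=
  ((List.range π.length).filter (fun i => decide (η.getD i 0 ≠ 0))).map (fun i => π.getD i 0)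

/-- `η` is an embedding of `σ` in `π`: a sequence of length `|π|` whose nonzero positions
are the positions of an occurrence of `σ` in `π` and whose nonzero letters spell `σ`. -/
def IsEmbedding (η σ π : List ℕ) : Prop :=
  η.length = π.length ∧ η.filter (fun x => decide (x ≠ 0)) = σ ∧ OrdIso σ (embOcc η π)

/-- `η` is a normal embedding: nonzero at every letter of `π` lying in the tail of an
adjacency (i.e. every position whose predecessor holds the previous value). -/
def IsNormalEmbedding (η σ π : List ℕ) : Prop :=
  IsEmbedding η σ π ∧
    ∀ i, i < π.length → 0 < i → π.getD i 0 = π.getD (i-1) 0 + 1 → η.getD i 0 ≠ 0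

instance (η σ π : List ℕ) : Decidable (IsNormalEmbedding η σ π) := by
  unfold IsNormalEmbedding IsEmbedding; infer_instance

/-- The number of normal embeddings of `σ` in `π`. -/
def normalCount (σ π : List ℕ) : ℕ :=
  ((listsOf π.length (σ.length + 1)).filter (fun η => decide (IsNormalEmbedding η σ π))).length

/-- The total number of letters in all tails of all adjacencies of `π`;
equivalently, the number of adjacency pairs of `π`. -/
def tailCount (π : List ℕ) : ℕ :=
  ((List.range π.length).filter (fun i => decide (0 < i ∧ π.getD i 0 = π.getD (i-1) 0 + 1))).length

/-- The number of occurrences of `σ` as a pattern in `π`. -/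
def occCount (σ π : List ℕ) : ℕ :=
  ((List.range π.length).sublists.filter
    (fun s => decide (OrdIso σ (s.map (fun i => π.getD i 0))))).length

/-- All words of length `n` on the alphabet `{1, …, k}`. -/
def wordsOf (n k : ℕ) : List (List ℕ) := (listsOf n k).map (List.map (· + 1))

/-- All permutations of `1, …, n`, as lists. -/
def permsOfLen (n : ℕ) : List (List ℕ) := ((List.range n).map (· + 1)).permutations

/-!
Let the triple adjacency of `π` occupy positions `i, i+1, i+2` and let `π'` be `π` with the
letter at position `i+2` deleted. A pattern of `π` without a triple adjacency also occurs in
`π'`: an occurrence uses at most two of the three positions, and sliding it back along the two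
adjacencies frees position `i+2`. Hence every element of `[1, π)` outside `[1, π']` has a triple
adjacency, so `μ(1, ·)` vanishes there by induction on the length, and comparing the defining
recursions of `μ` on `[1, π]` and `[1, π']` leaves `μ(1, π) = 0`.
-/

lemma mem_range_map_succ {n x : ℕ} : x ∈ (List.range n).map (· + 1) ↔ 1 ≤ x ∧ x ≤ n := by
  simp only [List.mem_map, List.mem_range]
  constructor
  · rintro ⟨a, ha, rfl⟩; omega
  · intro hx; exact ⟨x - 1, by omega, by omega⟩

lemma isPermList_iff {l : List ℕ} :
    IsPermList l ↔ l.Nodup ∧ ∀ x ∈ l, 1 ≤ x ∧ x ≤ l.length := by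
  have hnd : ((List.range l.length).map (· + 1)).Nodup :=
    List.nodup_range.map fun _ _ h => Nat.succ_injective h
  constructor
  · intro h
    exact ⟨h.nodup_iff.2 hnd, fun x hx => mem_range_map_succ.1 (h.subset hx)⟩
  · rintro ⟨hl, hmem⟩
    exact (hl.subperm fun x hx => mem_range_map_succ.2 (hmem x hx)).perm_of_length_le (by simp)

lemma isPermList_singleton_one : IsPermList [1] :=
  isPermList_iff.2 ⟨by simp, by simp⟩

namespace IsPermList

variable {l : List ℕ}

lemma nodup (h : IsPermList l) : l.Nodup := (isPermList_iff.1 h).1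

lemma mem_iff (h : IsPermList l) {x : ℕ} : x ∈ l ↔ 1 ≤ x ∧ x ≤ l.length :=
  (List.Perm.mem_iff h).trans mem_range_map_succ

lemma getD_ne_getD (h : IsPermList l) {p q : ℕ} (hp : p < l.length) (hq : q < l.length)
    (hpq : p ≠ q) : l.getD p 0 ≠ l.getD q 0 := by
  rw [List.getD_eq_getElem _ _ hp, List.getD_eq_getElem _ _ hq]
  exact fun he => hpq (h.nodup.getElem_inj_iff.1 he)

lemma one_le_getD (h : IsPermList l) {p : ℕ} (hp : p < l.length) :
    1 ≤ l.getD p 0 ∧ l.getD p 0 ≤ l.length :=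
  h.mem_iff.1 (by rw [List.getD_eq_getElem _ _ hp]; exact List.getElem_mem hp)

lemma exists_getD_eq (h : IsPermList l) {x : ℕ} (hx₁ : 1 ≤ x) (hx₂ : x ≤ l.length) :
    ∃ p < l.length, l.getD p 0 = x := by
  obtain ⟨p, hp, rfl⟩ := List.mem_iff_getElem.1 (h.mem_iff.2 ⟨hx₁, hx₂⟩)
  exact ⟨p, hp, List.getD_eq_getElem _ _ hp⟩

lemma getD_eq_card_lt (h : IsPermList l) {a : ℕ} (ha : a < l.length) :
    l.getD a 0 = ((Finset.range l.length).filter (l.getD · 0 < l.getD a 0)).card + 1 := by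
  have himage : ((Finset.range l.length).filter (l.getD · 0 < l.getD a 0)).image (l.getD · 0) =
      Finset.Ico 1 (l.getD a 0) := by
    ext x
    simp only [Finset.mem_image, Finset.mem_filter, Finset.mem_range, Finset.mem_Ico]
    constructor
    · rintro ⟨j, ⟨hj, hlt⟩, rfl⟩; exact ⟨(h.one_le_getD hj).1, hlt⟩
    · rintro ⟨h₁, h₂⟩
      obtain ⟨j, hj, rfl⟩ := h.exists_getD_eq h₁ (by have := h.one_le_getD ha; omega)
      exact ⟨j, ⟨hj, h₂⟩, rfl⟩
  have hinj : Set.InjOn (l.getD · 0) ((Finset.range l.length).filter (l.getD · 0 < l.getD a 0)) := by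
    intro p hp q hq hpq
    simp only [Finset.mem_coe, Finset.mem_filter, Finset.mem_range] at hp hq
    by_contra hne
    exact h.getD_ne_getD hp.1 hq.1 hne hpq
  rw [← Finset.card_image_of_injOn hinj, himage, Nat.card_Ico]
  have := h.one_le_getD ha
  omega

lemma eq_of_ordIso {l' : List ℕ} (h : IsPermList l) (h' : IsPermList l') (hiso : OrdIso l l') :
    l = l' := by
  obtain ⟨hlen, hlt⟩ := hiso
  refine List.ext_getElem hlen fun a ha ha' => ?_
  rw [← List.getD_eq_getElem l 0 ha, ← List.getD_eq_getElem l' 0 ha', h.getD_eq_card_lt ha,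
    h'.getD_eq_card_lt ha', ← hlen]
  congr 2
  exact Finset.filter_congr fun j hj => hlt j (Finset.mem_range.1 hj) a ha

end IsPermList

structure IsPatternEmbedding (σ π : List ℕ) (f : ℕ → ℕ) : Prop where
  lt : ∀ a b, a < b → b < σ.length → f a < f b
  lt_length : ∀ a, a < σ.length → f a < π.length
  getD_lt_iff : ∀ a b, a < σ.length → b < σ.length →
    (σ.getD a 0 < σ.getD b 0 ↔ π.getD (f a) 0 < π.getD (f b) 0)

lemma occursIn_iff_exists_isPatternEmbedding {σ π : List ℕ} :
    occursIn σ π ↔ ∃ f, IsPatternEmbedding σ π f := by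
  constructor
  · rintro ⟨s, hs, hlen, hiso⟩
    obtain ⟨g, hg⟩ := List.sublist_iff_exists_fin_orderEmbedding_get_eq.1 (List.mem_sublists.1 hs)
    have hval : ∀ a (ha : a < σ.length),
        s.getD a 0 = π.getD (g ⟨a, hlen ▸ ha⟩) 0 := fun a ha => by
      rw [List.getD_eq_getElem _ _ (hlen ▸ ha), List.getD_eq_getElem _ _ (g _).isLt]
      exact hg ⟨a, hlen ▸ ha⟩
    refine ⟨fun a => if ha : a < σ.length then g ⟨a, hlen ▸ ha⟩ else 0, ⟨?_, ?_, ?_⟩⟩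
    · intro a b hab hb
      simp only [dif_pos hb, dif_pos (hab.trans hb)]
      exact g.strictMono (Fin.mk_lt_mk.2 hab)
    · intro a ha
      simp only [dif_pos ha]
      exact (g _).isLt
    · intro a b ha hb
      simp only [dif_pos ha, dif_pos hb, hiso a ha b hb, hval a ha, hval b hb]
  · rintro ⟨f, hmono, hlen, hlt⟩
    refine ⟨(List.range σ.length).map (fun a => π.getD (f a) 0), ?_, by simp, fun a ha b hb => ?_⟩
    · rw [List.mem_sublists, List.sublist_iff_exists_fin_orderEmbedding_get_eq]
      refine ⟨OrderEmbedding.ofStrictMono (fun i => ⟨f i, hlen i (by simpa using i.isLt)⟩)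
        fun a b hab => hmono a b hab (by simpa using b.isLt), fun i => ?_⟩
      have hi : (i : ℕ) < σ.length := by simpa using i.isLt
      simp only [List.get_eq_getElem, List.getElem_map, List.getElem_range]
      exact List.getD_eq_getElem _ _ (hlen i hi)
    · rw [hlt a b ha hb]
      simp [ha, hb]

namespace IsPatternEmbedding

variable {σ π : List ℕ} {f : ℕ → ℕ}

lemma lt_iff (hf : IsPatternEmbedding σ π f) {a b : ℕ} (ha : a < σ.length) (hb : b < σ.length) :
    f a < f b ↔ a < b := by
  refine ⟨fun h => ?_, fun h => hf.lt a b h hb⟩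
  by_contra hba
  rcases (not_lt.1 hba).lt_or_eq with hba | rfl
  · exact absurd (hf.lt b a hba ha) (by omega)
  · exact lt_irrefl _ h

lemma occursIn (hf : IsPatternEmbedding σ π f) : occursIn σ π :=
  occursIn_iff_exists_isPatternEmbedding.2 ⟨f, hf⟩

end IsPatternEmbedding

lemma occursIn_refl (l : List ℕ) : occursIn l l :=
  IsPatternEmbedding.occursIn (f := id) ⟨fun _ _ h _ => h, fun _ h => h, fun _ _ _ _ => Iff.rfl⟩

lemma occursIn_trans {a b c : List ℕ} (hab : occursIn a b) (hbc : occursIn b c) :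
    occursIn a c := by
  obtain ⟨f, hf⟩ := occursIn_iff_exists_isPatternEmbedding.1 hab
  obtain ⟨g, hg⟩ := occursIn_iff_exists_isPatternEmbedding.1 hbc
  refine IsPatternEmbedding.occursIn (f := g ∘ f) ⟨fun x y hxy hy => ?_, fun x hx => ?_,
    fun x y hx hy => ?_⟩
  · exact hg.lt _ _ (hf.lt x y hxy hy) (hf.lt_length y hy)
  · exact hg.lt_length _ (hf.lt_length x hx)
  · exact (hf.getD_lt_iff x y hx hy).trans
      (hg.getD_lt_iff _ _ (hf.lt_length x hx) (hf.lt_length y hy))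

lemma occursIn_singleton_one {l : List ℕ} (hl : l ≠ []) : occursIn [1] l :=
  IsPatternEmbedding.occursIn (f := fun _ => 0)
    ⟨fun a b hab hb => by rw [List.length_singleton] at hb; omega,
      fun _ _ => List.length_pos_iff.2 hl, fun a b ha hb => by
        rw [List.length_singleton, Nat.lt_one_iff] at ha hb
        subst ha hb
        exact iff_of_false (lt_irrefl _) (lt_irrefl _)⟩

lemma IsPermList.length_lt_of_occursIn {σ π : List ℕ} (hσ : IsPermList σ) (hπ : IsPermList π)
    (hocc : occursIn σ π) (hne : σ ≠ π) : σ.length < π.length := by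
  obtain ⟨s, hs, hlen, hiso⟩ := hocc
  have hs := List.mem_sublists.1 hs
  refine (hlen ▸ hs.length_le).lt_of_ne fun heq => hne ?_
  have hsπ := hs.eq_of_length (hlen ▸ heq)
  exact hσ.eq_of_ordIso hπ (hsπ ▸ ⟨hlen, hiso⟩)

lemma occursIn.length_le {σ π : List ℕ} (h : occursIn σ π) : σ.length ≤ π.length := by
  obtain ⟨s, hs, hlen, -⟩ := h
  exact hlen ▸ (List.mem_sublists.1 hs).length_le

lemma mem_intervalList {a b z : List ℕ} :
    z ∈ intervalList a b ↔ IsPermList z ∧ occursIn a z ∧ occursIn z b := by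
  simp only [intervalList, permsUpTo, List.mem_filter, List.mem_flatMap, List.mem_range,
    List.mem_permutations, decide_eq_true_eq]
  constructor
  · rintro ⟨⟨k, -, hk⟩, hocc⟩
    have hlen : z.length = k := by simpa using hk.length_eq
    exact ⟨by rwa [IsPermList, hlen], hocc⟩
  · rintro ⟨hz, hocc⟩
    exact ⟨⟨z.length, Nat.lt_succ_of_le hocc.2.length_le, hz⟩, hocc⟩

lemma nodup_intervalList (a b : List ℕ) : (intervalList a b).Nodup := by
  refine List.Nodup.filter _ (List.nodup_flatMap.2 ⟨fun k _ => ?_, ?_⟩)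
  · exact List.nodup_permutations _ (List.nodup_range.map fun _ _ h => Nat.succ_injective h)
  · refine List.nodup_range.pairwise_of_forall_ne fun j _ k _ hjk z hzj hzk => hjk ?_
    simpa using (List.mem_permutations.1 hzj).length_eq.symm.trans
      (List.mem_permutations.1 hzk).length_eq

lemma sum_intervalList_eq_sum_toFinset (μ : List ℕ → List ℕ → ℤ) (a b : List ℕ) :
    ((intervalList a b).map (μ a)).sum = ∑ z ∈ (intervalList a b).toFinset, μ a z :=
  (List.sum_toFinset _ (nodup_intervalList a b)).symm

theorem MoebiusOn.eq_zero_of_eq_zero_off_interval {μ : List ℕ → List ℕ → ℤ} (hμ : MoebiusOn μ)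
    {a b b' : List ℕ} (ha : IsPermList a) (hb : IsPermList b) (hb' : IsPermList b')
    (hab' : occursIn a b') (hb'b : occursIn b' b)
    (hlen₁ : a.length < b'.length) (hlen₂ : b'.length < b.length)
    (hvanish : ∀ w ∈ intervalList a b, w ≠ b → ¬ occursIn w b' → μ a w = 0) :
    μ a b = 0 := by
  set S := (intervalList a b).toFinset
  set S' := (intervalList a b').toFinset
  have hsum : ∑ z ∈ S, μ a z = 0 := by
    rw [← sum_intervalList_eq_sum_toFinset]
    exact hμ.2 a b ha hb (occursIn_trans hab' hb'b) (by rintro rfl; omega)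
  have hsum' : ∑ z ∈ S', μ a z = 0 := by
    rw [← sum_intervalList_eq_sum_toFinset]
    exact hμ.2 a b' ha hb' hab' (by rintro rfl; omega)
  have hbS : b ∈ S := List.mem_toFinset.2 (mem_intervalList.2 ⟨hb, occursIn_trans hab' hb'b,
    occursIn_refl b⟩)
  have hsub : S' ⊆ S.erase b := fun w hw => by
    obtain ⟨hw, haw, hwb'⟩ := mem_intervalList.1 (List.mem_toFinset.1 hw)
    refine Finset.mem_erase.2 ⟨by rintro rfl; exact absurd hwb'.length_le (by omega), ?_⟩
    exact List.mem_toFinset.2 (mem_intervalList.2 ⟨hw, haw, occursIn_trans hwb' hb'b⟩)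
  have hrest : ∑ z ∈ S', μ a z = ∑ z ∈ S.erase b, μ a z :=
    Finset.sum_subset hsub fun w hw hwS' => by
      obtain ⟨hne, hwS⟩ := Finset.mem_erase.1 hw
      refine hvanish w (List.mem_toFinset.1 hwS) hne fun hwb' => hwS' ?_
      obtain ⟨hw, haw, -⟩ := mem_intervalList.1 (List.mem_toFinset.1 hwS)
      exact List.mem_toFinset.2 (mem_intervalList.2 ⟨hw, haw, hwb'⟩)
  rw [← Finset.add_sum_erase S _ hbS, ← hrest, hsum'] at hsum
  simpa using hsum

def decAbove (v x : ℕ) : ℕ := if v < x then x - 1 else x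

lemma decAbove_lt_decAbove_iff {v x y : ℕ} (hx : x ≠ v) (hy : y ≠ v) :
    decAbove v x < decAbove v y ↔ x < y := by
  unfold decAbove; split_ifs <;> omega

def eraseIdxStd (π : List ℕ) (i : ℕ) : List ℕ := (π.eraseIdx i).map (decAbove (π.getD i 0))

section eraseIdxStd

variable {π : List ℕ} {i : ℕ}

lemma length_eraseIdxStd (hi : i < π.length) : (eraseIdxStd π i).length = π.length - 1 := by
  simp [eraseIdxStd, List.length_eraseIdx, hi]

lemma getD_eraseIdxStd (hi : i < π.length) {j : ℕ} (hj : j < π.length - 1) :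
    (eraseIdxStd π i).getD j 0 = decAbove (π.getD i 0) (π.getD (if j < i then j else j + 1) 0) := by
  have hj' : j < (π.eraseIdx i).length := by rw [List.length_eraseIdx_of_lt hi]; exact hj
  rw [eraseIdxStd, List.getD_eq_getElem _ _ (by simpa using hj'), List.getElem_map,
    List.getElem_eraseIdx]
  split_ifs with hji
  · rw [List.getD_eq_getElem π 0 (by omega : j < π.length)]
  · rw [List.getD_eq_getElem π 0 (by omega : j + 1 < π.length)]

lemma isPermList_eraseIdxStd (hπ : IsPermList π) (hi : i < π.length) :
    IsPermList (eraseIdxStd π i) := by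
  set v := π.getD i 0
  have hv := hπ.one_le_getD hi
  have hmem : ∀ x, x ∈ π.eraseIdx i ↔ x ≠ v ∧ x ∈ π := fun x => by
    rw [← hπ.nodup.erase_getElem i hi, hπ.nodup.mem_erase_iff, ← List.getD_eq_getElem _ 0 hi]
  refine isPermList_iff.2 ⟨(hπ.nodup.sublist (List.eraseIdx_sublist _ _)).map_on ?_, ?_⟩
  · intro x hx y hy hxy
    rw [hmem] at hx hy
    by_contra hne
    rcases Nat.lt_or_gt_of_ne hne with h | h
    · exact absurd hxy ((decAbove_lt_decAbove_iff hx.1 hy.1).2 h).ne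
    · exact absurd hxy ((decAbove_lt_decAbove_iff hy.1 hx.1).2 h).ne'
  · intro y hy
    obtain ⟨x, hx, rfl⟩ := List.mem_map.1 hy
    obtain ⟨hxv, hxπ⟩ := (hmem x).1 hx
    have := hπ.mem_iff.1 hxπ
    rw [length_eraseIdxStd hi]
    unfold decAbove; split_ifs <;> omega

lemma eraseIdxStd_occursIn (hπ : IsPermList π) (hi : i < π.length) :
    occursIn (eraseIdxStd π i) π := by
  refine IsPatternEmbedding.occursIn (f := fun j => if j < i then j else j + 1)
    ⟨fun a b hab hb => by split_ifs <;> omega, fun a ha => ?_, fun a b ha hb => ?_⟩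
  · rw [length_eraseIdxStd hi] at ha
    split_ifs <;> omega
  · rw [length_eraseIdxStd hi] at ha hb
    rw [getD_eraseIdxStd hi ha, getD_eraseIdxStd hi hb]
    apply decAbove_lt_decAbove_iff <;>
      exact hπ.getD_ne_getD (by split_ifs <;> omega) hi (by split_ifs <;> omega)

end eraseIdxStd

def OccursAvoiding (σ π : List ℕ) (q : ℕ) : Prop :=
  ∃ f, IsPatternEmbedding σ π f ∧ ∀ t < σ.length, f t ≠ q

lemma OccursAvoiding.occursIn_eraseIdxStd {σ π : List ℕ} {q : ℕ} (hπ : IsPermList π)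
    (hq : q < π.length) (h : OccursAvoiding σ π q) : occursIn σ (eraseIdxStd π q) := by
  obtain ⟨f, hf, hfq⟩ := h
  have hval : ∀ t < σ.length, (eraseIdxStd π q).getD (if f t < q then f t else f t - 1) 0 =
      decAbove (π.getD q 0) (π.getD (f t) 0) := fun t ht => by
    have := hf.lt_length t ht
    have := hfq t ht
    rw [getD_eraseIdxStd hq (by split_ifs <;> omega)]
    congr 2
    split_ifs <;> omega
  refine IsPatternEmbedding.occursIn (f := fun t => if f t < q then f t else f t - 1)
    ⟨fun a b hab hb => ?_, fun a ha => ?_, fun a b ha hb => ?_⟩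
  · have := hf.lt a b hab hb
    have := hfq a (hab.trans hb)
    have := hfq b hb
    split_ifs <;> omega
  · have := hf.lt_length a ha
    have := hfq a ha
    rw [length_eraseIdxStd hq]
    split_ifs <;> omega
  · rw [hf.getD_lt_iff a b ha hb, hval a ha, hval b hb, decAbove_lt_decAbove_iff]
    · exact hπ.getD_ne_getD (hf.lt_length a ha) hq (hfq a ha)
    · exact hπ.getD_ne_getD (hf.lt_length b hb) hq (hfq b hb)

def HasTripleAdjacency (l : List ℕ) : Prop :=
  ∃ i, i + 2 < l.length ∧ l.getD (i + 1) 0 = l.getD i 0 + 1 ∧ l.getD (i + 2) 0 = l.getD i 0 + 2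

lemma IsPatternEmbedding.adjacent_of_eq {σ π : List ℕ} {f : ℕ → ℕ}
    (hf : IsPatternEmbedding σ π f) (hσ : IsPermList σ) {s t q : ℕ} (hs : s < σ.length)
    (ht : t < σ.length) (hfs : f s = q) (hft : f t = q + 1)
    (hadj : π.getD (q + 1) 0 = π.getD q 0 + 1) :
    t = s + 1 ∧ σ.getD t 0 = σ.getD s 0 + 1 := by
  have hst : s < t := (hf.lt_iff hs ht).1 (by omega)
  constructor
  · by_contra hne
    have := hf.lt s (s + 1) (by omega) (by omega)
    have := hf.lt (s + 1) t (by omega) ht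
    omega
  · have hlt : σ.getD s 0 < σ.getD t 0 := (hf.getD_lt_iff s t hs ht).2 (by rw [hfs, hft]; omega)
    by_contra hne
    obtain ⟨a, ha, hva⟩ := hσ.exists_getD_eq (x := σ.getD s 0 + 1) (by omega)
      (by have := hσ.one_le_getD ht; omega)
    have h₁ := (hf.getD_lt_iff s a hs ha).1 (by omega)
    have h₂ := (hf.getD_lt_iff a t ha ht).1 (by omega)
    rw [hfs] at h₁
    rw [hft] at h₂
    omega

lemma OccursAvoiding.succ {σ π : List ℕ} {q : ℕ} (hπ : IsPermList π) (hq : q + 1 < π.length)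
    (hadj : π.getD (q + 1) 0 = π.getD q 0 + 1) (h : OccursAvoiding σ π q) :
    OccursAvoiding σ π (q + 1) := by
  obtain ⟨f, hf, hfq⟩ := h
  have hother : ∀ t < σ.length, f t ≠ q + 1 →
      π.getD (f t) 0 ≠ π.getD q 0 ∧ π.getD (f t) 0 ≠ π.getD q 0 + 1 := fun t ht hne => by
    refine ⟨hπ.getD_ne_getD (hf.lt_length t ht) (by omega) (hfq t ht), hadj ▸ ?_⟩
    exact hπ.getD_ne_getD (hf.lt_length t ht) hq hne
  refine ⟨fun t => if f t = q + 1 then q else f t, ⟨fun a b hab hb => ?_, fun a ha => ?_,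
    fun a b ha hb => ?_⟩, fun t ht => ?_⟩
  · have := hf.lt a b hab hb
    have := hfq a (hab.trans hb)
    have := hfq b hb
    split_ifs <;> omega
  · have := hf.lt_length a ha
    split_ifs <;> omega
  · rw [hf.getD_lt_iff a b ha hb]
    split_ifs with ha' hb' hb'
    · rw [ha', hb']
      exact iff_of_false (lt_irrefl _) (lt_irrefl _)
    · have := hother b hb hb'
      rw [ha', hadj]
      omega
    · have := hother a ha ha'
      rw [hb', hadj]
      omega
    · rfl
  · dsimp only
    split_ifs <;> omega

theorem occursIn_eraseIdxStd_of_not_hasTripleAdjacency {σ π : List ℕ} {i : ℕ}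
    (hπ : IsPermList π) (hσ : IsPermList σ) (hi : i + 2 < π.length)
    (h₁ : π.getD (i + 1) 0 = π.getD i 0 + 1) (h₂ : π.getD (i + 2) 0 = π.getD (i + 1) 0 + 1)
    (hocc : occursIn σ π) (hσt : ¬ HasTripleAdjacency σ) :
    occursIn σ (eraseIdxStd π (i + 2)) := by
  obtain ⟨f, hf⟩ := occursIn_iff_exists_isPatternEmbedding.1 hocc
  refine OccursAvoiding.occursIn_eraseIdxStd hπ hi ?_
  by_cases hf₂ : ∀ t < σ.length, f t ≠ i + 2
  · exact ⟨f, hf, hf₂⟩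
  by_cases hf₁ : ∀ t < σ.length, f t ≠ i + 1
  · exact OccursAvoiding.succ hπ hi h₂ ⟨f, hf, hf₁⟩
  by_cases hf₀ : ∀ t < σ.length, f t ≠ i
  · exact (OccursAvoiding.succ hπ (by omega) h₁ ⟨f, hf, hf₀⟩).succ hπ hi h₂
  push Not at hf₀ hf₁ hf₂
  obtain ⟨t₀, ht₀, hft₀⟩ := hf₀
  obtain ⟨t₁, ht₁, hft₁⟩ := hf₁
  obtain ⟨t₂, ht₂, hft₂⟩ := hf₂
  obtain ⟨rfl, hv₁⟩ := hf.adjacent_of_eq hσ ht₀ ht₁ hft₀ hft₁ h₁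
  obtain ⟨rfl, hv₂⟩ := hf.adjacent_of_eq hσ ht₁ ht₂ hft₁ hft₂ h₂
  exact absurd ⟨t₀, ht₂, hv₁, by rw [show t₀ + 2 = t₀ + 1 + 1 from rfl, hv₂, hv₁]⟩ hσt

theorem MoebiusOn.apply_one_eq_zero_of_hasTripleAdjacency {μ : List ℕ → List ℕ → ℤ}
    (hμ : MoebiusOn μ) {π : List ℕ} (hπ : IsPermList π) (h : HasTripleAdjacency π) :
    μ [1] π = 0 := by
  induction hn : π.length using Nat.strong_induction_on generalizing π with
  | _ n ih =>
  obtain ⟨i, hi, h₁, h₂⟩ := h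
  have hlen := length_eraseIdxStd hi
  refine hμ.eq_zero_of_eq_zero_off_interval isPermList_singleton_one hπ
    (isPermList_eraseIdxStd hπ hi) (occursIn_singleton_one fun h => ?_)
    (eraseIdxStd_occursIn hπ hi) (by rw [List.length_singleton]; omega) (by omega)
    fun w hw hne hwπ' => ?_
  · rw [h, List.length_nil] at hlen
    omega
  obtain ⟨hw, -, hwπ⟩ := mem_intervalList.1 hw
  refine ih w.length (hn ▸ hw.length_lt_of_occursIn hπ hwπ hne) hw ?_ rfl
  by_contra hwt
  exact hwπ' (occursIn_eraseIdxStd_of_not_hasTripleAdjacency hπ hw hi h₁ (by omega) hwπ hwt)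

theorem moebius_zero_of_triple_general (μ : List ℕ → List ℕ → ℤ) (hμ : MoebiusOn μ)
    (π : List ℕ) (n : ℕ) (hn : π.length = n)
    (hπ : IsPermList π)
    (h : ∃ i, i + 2 < n ∧ π.getD (i+1) 0 = π.getD i 0 + 1 ∧
          π.getD (i+2) 0 = π.getD i 0 + 2) :
    μ [1] π = 0 := by
  obtain ⟨i, hi, h₁, h₂⟩ := h
  exact hμ.apply_one_eq_zero_of_hasTripleAdjacency hπ ⟨i, hn ▸ hi, h₁, h₂⟩

/-- if `π` (length `n > 2`, one descent) has a triple adjacency,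
then `μ(1,π) = 0`. -/
theorem moebius_zero_of_triple (μ : List ℕ → List ℕ → ℤ) (hμ : MoebiusOn μ)
    (π : List ℕ) (n : ℕ) (hn : π.length = n) (h2 : 2 < n)
    (hπ : IsPermList π) (hd : des π = 1)
    (h : ∃ i, i + 2 < n ∧ π.getD (i+1) 0 = π.getD i 0 + 1 ∧
          π.getD (i+2) 0 = π.getD i 0 + 2) :
    μ [1] π = 0 :=
  moebius_zero_of_triple_general μ hμ π n hn hπ h
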